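/- With two agents having identical preferences a ≻ b ≻ c over three objects, the assignment A_1 = (1/6, 5/6, 0) and A_2 = (4/6, 1/6, 1/6) is weakly sd-envyfree but not ld-envyfree. -/

import Mathlib

open Finset

/-- The assignment of Statement 3: `A 0 = (1/6, 5/6, 0)`, `A 1 = (4/6, 1/6, 1/6)`
over objects `(a, b, c) = (0, 1, 2)`. -/
noncomputable def A3 : Fin 2 → Fin 3 → ℝ := ![![1/6, 5/6, 0], ![4/6, 1/6, 1/6]]

/-- Both agents have preference `a ≻ b ≻ c`, i.e. object `j` is preferred to `ℓ` iff `j < ℓ`. -/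
def pref3 (j ℓ : Fin 3) : Prop := j < ℓ

instance : DecidableRel pref3 := fun j ℓ => by unfold pref3; infer_instance

theorem filter_pref3_or_eq (ℓ : Fin 3) :
    univ.filter (fun j => pref3 j ℓ ∨ j = ℓ) = Iic ℓ := by
  ext j
  rw [mem_filter, mem_Iic, le_iff_lt_or_eq]
  exact and_iff_right (mem_univ j)

theorem not_pref3_zero (j : Fin 3) : ¬ pref3 j 0 :=
  Fin.not_lt_zero j

theorem sum_Iic_zero (p : Fin 3 → ℝ) : ∑ j ∈ Iic 0, p j = p 0 := by
  rw [show Iic (0 : Fin 3) = {0} by decide, sum_singleton]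

theorem sum_Iic_one (p : Fin 3 → ℝ) : ∑ j ∈ Iic 1, p j = p 0 + p 1 := by
  rw [show Iic (1 : Fin 3) = {0, 1} by decide, sum_pair (by decide)]

/-- with both agents preferring a ≻ b ≻ c, the assignment
`A_1 = (1/6, 5/6, 0)`, `A_2 = (4/6, 1/6, 1/6)` is weakly sd-envyfree but not ld-envyfree. -/
theorem weakSd_not_ld :
    (∀ i k : Fin 2, A3 i ≠ A3 k →
      ∃ ℓ : Fin 3,
        ∑ j ∈ Finset.univ.filter (fun j => pref3 j ℓ ∨ j = ℓ), A3 i j >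
        ∑ j ∈ Finset.univ.filter (fun j => pref3 j ℓ ∨ j = ℓ), A3 k j)
    ∧ (∃ (i k : Fin 2) (ℓ : Fin 3), A3 k ℓ > A3 i ℓ ∧ ∀ j, pref3 j ℓ → A3 i j = A3 k j) := by
  simp only [filter_pref3_or_eq]
  refine ⟨fun i k hik => ?_, 0, 1, 0, by norm_num [A3], fun j hj => absurd hj (not_pref3_zero j)⟩
  fin_cases i <;> fin_cases k
  · exact absurd rfl hik
  · -- agent 1 gets more of `{a, b}`: `1 > 5/6`
    exact ⟨1, by norm_num [sum_Iic_one, A3]⟩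
  · -- agent 2 gets more of `a`: `4/6 > 1/6`
    exact ⟨0, by norm_num [sum_Iic_zero, A3]⟩
  · exact absurd rfl hik
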